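/- arXiv:2605.03739 — 2 statements merged into one kernel-verified Lean document; each statement's English description precedes it below -/
import Mathlib

section
/- Let f : ℝ → ℝ be four times continuously differentiable. Define the Gauss–Legendre edge value Q(h) = (1/2) f(0) + (1/2) f(t₁(h)) + (1/2) f(t₂(h)) - (1/2) f(h), where t₁(h) = h/2 - h/(2√3) and t₂(h) = h/2 + h/(2√3). Then there exist constants C > 0 and h₀ > 0 such that for all 0 < h ≤ h₀, |Q(h) - ( f(0) - (h²/12) f''(0) - (h³/24) f'''(0) )| ≤ C h⁴. -/
/-!
The edge value is a linear functional of `f`, and the two Gauss–Legendre nodes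
`t₁, t₂` satisfy `t₁ + t₂ = h`, `t₁² + t₂² = 2h²/3`, `t₁³ + t₂³ = h³/2`; hence on every cubic
`a₀ + a₁x + a₂x²/2 + a₃x³/6` it returns exactly `a₀ - h²a₂/12 - h³a₃/24`. Applying it to the
cubic Taylor polynomial of `f` at `0` leaves only the Taylor remainders at the nodes `0, t₁, t₂, h`
of `[0, h]`, each `O(h⁴)`.
-/

open Set Finset
open scoped Nat

theorem exists_abs_sub_sum_iteratedDeriv_le {f : ℝ → ℝ} {n : ℕ} (hf : ContDiff ℝ (n + 1) f)
    {a b : ℝ} (hab : a < b) :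
    ∃ C, ∀ x ∈ Icc a b,
      |f x - ∑ k ∈ range (n + 1), iteratedDeriv k f a / k ! * (x - a) ^ k| ≤
        C * (x - a) ^ (n + 1) := by
  obtain ⟨C, hC⟩ := exists_taylor_mean_remainder_bound hab.le hf.contDiffOn
  refine ⟨C, fun x hx => ?_⟩
  have htaylor : taylorWithinEval f n (Icc a b) a x =
      ∑ k ∈ range (n + 1), iteratedDeriv k f a / k ! * (x - a) ^ k := by
    rw [taylor_within_apply]
    refine sum_congr rfl fun k hk => ?_
    have hkn : (k : WithTop ℕ∞) ≤ n + 1 := by exact_mod_cast (mem_range.1 hk).le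
    rw [iteratedDerivWithin_eq_iteratedDeriv (uniqueDiffOn_Icc hab) (hf.contDiffAt.of_le hkn)
      (left_mem_Icc.2 hab.le), smul_eq_mul]
    ring
  simpa [htaylor] using hC x hx

noncomputable def gaussLegendreEdgeValue (f : ℝ → ℝ) (h : ℝ) : ℝ :=
  (1 / 2) * f 0 + (1 / 2) * f (h / 2 - h / (2 * √3)) + (1 / 2) * f (h / 2 + h / (2 * √3)) -
    (1 / 2) * f h

theorem gaussLegendreEdgeValue_sub (f g : ℝ → ℝ) (h : ℝ) :
    gaussLegendreEdgeValue (fun x => f x - g x) h =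
      gaussLegendreEdgeValue f h - gaussLegendreEdgeValue g h := by
  simp only [gaussLegendreEdgeValue]
  ring

theorem gaussLegendreEdgeValue_cubic (c : ℕ → ℝ) (h : ℝ) :
    gaussLegendreEdgeValue (fun x => ∑ k ∈ range 4, c k / k ! * x ^ k) h =
      c 0 - h ^ 2 / 12 * c 2 - h ^ 3 / 24 * c 3 := by
  have hsqrt : √3 ^ 2 = 3 := Real.sq_sqrt (by norm_num)
  simp only [gaussLegendreEdgeValue, sum_range_succ, sum_range_zero, Nat.factorial]
  field_simp
  linear_combination -(2304 * c 2 * h ^ 2 + 1152 * c 3 * h ^ 3) * √3 * hsqrt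

theorem div_two_mul_sqrt_three_le {h : ℝ} (hh : 0 ≤ h) : h / (2 * √3) ≤ h / 2 := by
  have : 1 ≤ √3 := Real.one_le_sqrt.2 (by norm_num)
  gcongr
  linarith

theorem abs_gaussLegendreEdgeValue_le {g : ℝ → ℝ} {K h : ℝ} (hK : 0 ≤ K) (hh : 0 ≤ h)
    (hg : ∀ x ∈ Icc 0 h, |g x| ≤ K * x ^ 4) :
    |gaussLegendreEdgeValue g h| ≤ 3 / 2 * K * h ^ 4 := by
  have hd := div_two_mul_sqrt_three_le hh
  have hd₀ : 0 ≤ h / (2 * √3) := by positivity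
  have hnode : ∀ x ∈ Icc 0 h, |g x| ≤ K * h ^ 4 := fun x hx =>
    (hg x hx).trans (by gcongr; exacts [hx.1, hx.2])
  have h₀ := hg 0 ⟨le_rfl, hh⟩
  have h₁ := hnode (h / 2 - h / (2 * √3)) ⟨by linarith, by linarith⟩
  have h₂ := hnode (h / 2 + h / (2 * √3)) ⟨by linarith, by linarith⟩
  have h₃ := hnode h ⟨hh, le_rfl⟩
  rw [abs_le] at h₀ h₁ h₂ h₃ ⊢
  simp only [gaussLegendreEdgeValue]
  constructor <;> nlinarith

/-- Fourth-order expansion of the two-point Gauss–Legendre edge value: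
`Q(h) = f(0) - (h²/12) f''(0) - (h³/24) f'''(0) + O(h⁴)`. -/
theorem gauss_legendre_edge_value_expansion
    (f : ℝ → ℝ) (hf : ContDiff ℝ 4 f) :
    ∃ C > 0, ∃ h₀ > 0, ∀ h : ℝ, 0 < h → h ≤ h₀ →
      |((1 / 2) * f 0 + (1 / 2) * f (h / 2 - h / (2 * Real.sqrt 3)) +
            (1 / 2) * f (h / 2 + h / (2 * Real.sqrt 3)) - (1 / 2) * f h) -
          (f 0 - h ^ 2 / 12 * iteratedDeriv 2 f 0 - h ^ 3 / 24 * iteratedDeriv 3 f 0)|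
        ≤ C * h ^ 4 := by
  obtain ⟨C, hC⟩ := exists_abs_sub_sum_iteratedDeriv_le (n := 3) hf zero_lt_one
  simp only [sub_zero] at hC
  refine ⟨3 / 2 * max C 1, by positivity, 1, one_pos, fun h hh hh₁ => ?_⟩
  calc _ = |gaussLegendreEdgeValue
        (fun x => f x - ∑ k ∈ range 4, iteratedDeriv k f 0 / k ! * x ^ k) h| := by
        rw [gaussLegendreEdgeValue_sub, gaussLegendreEdgeValue_cubic, iteratedDeriv_zero]
        rfl
    _ ≤ 3 / 2 * max C 1 * h ^ 4 :=
        abs_gaussLegendreEdgeValue_le (by positivity) hh.le fun x hx =>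
          (hC x ⟨hx.1, hx.2.trans hh₁⟩).trans
            (by gcongr; exacts [pow_nonneg hx.1 _, le_max_left _ _])
end

section
/- Let f : ℝ → ℝ be four times continuously differentiable. Define Q_Lob(h) = (2/3) f(0) + (2/3) f(h/2) - (1/3) f(h) and Q_Leg(h) = (1/2) f(0) + (1/2) f(h/2 - h/(2√3)) + (1/2) f(h/2 + h/(2√3)) - (1/2) f(h). Then the two Gauss-type edge values agree to fourth order: there exist C > 0 and h₀ > 0 such that |Q_Lob(h) - Q_Leg(h)| ≤ C h⁴ for all 0 < h ≤ h₀. -/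
open Set

lemma comb_poly_vanish (d0 d1 d2 d3 h : ℝ) :
    let s := Real.sqrt 3
    let P : ℝ → ℝ := fun x => d0 + d1 * x + d2 * x ^ 2 + d3 * x ^ 3
    (2 / 3) * P 0 + (2 / 3) * P (h / 2) - (1 / 3) * P h -
      ((1 / 2) * P 0 + (1 / 2) * P (h / 2 - h / (2 * s)) +
        (1 / 2) * P (h / 2 + h / (2 * s)) - (1 / 2) * P h) = 0 := by
  intro s P
  have hs : s ^ 2 = 3 := Real.sq_sqrt (by norm_num)
  have hs0 : s ≠ 0 := ne_of_gt (Real.sqrt_pos.mpr (by norm_num))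
  have ha : (h / (2 * s)) ^ 2 = h ^ 2 / 12 := by
    rw [div_pow, mul_pow, hs]; ring
  simp only [P]
  linear_combination (-(d2) - (3 / 2) * h * d3) * ha

set_option maxHeartbeats 1000000 in
/-- The Gauss–Lobatto and Gauss–Legendre edge values agree to fourth order. -/
theorem gauss_edge_values_agree_fourth_order
    (f : ℝ → ℝ) (hf : ContDiff ℝ 4 f) :
    ∃ C > 0, ∃ h₀ > 0, ∀ h : ℝ, 0 < h → h ≤ h₀ →
      |((2 / 3) * f 0 + (2 / 3) * f (h / 2) - (1 / 3) * f h) -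
          ((1 / 2) * f 0 + (1 / 2) * f (h / 2 - h / (2 * Real.sqrt 3)) +
            (1 / 2) * f (h / 2 + h / (2 * Real.sqrt 3)) - (1 / 2) * f h)|
        ≤ C * h ^ 4 := by
  set s := Real.sqrt 3 with hs_def
  have hs1 : (1 : ℝ) ≤ s := by
    rw [hs_def, show (1:ℝ) = Real.sqrt 1 by simp]
    exact Real.sqrt_le_sqrt (by norm_num)
  have hs0 : (0 : ℝ) < s := lt_of_lt_of_le one_pos hs1
  have hfI : ContDiffOn ℝ 4 f (Icc (0:ℝ) 1) := hf.contDiffOn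
  -- bound of 4th derivative on [0,1]
  have hcont : ContinuousOn (iteratedDerivWithin 4 f (Icc (0:ℝ) 1)) (Icc (0:ℝ) 1) := by
    apply ContDiffOn.continuousOn_iteratedDerivWithin hfI le_rfl
    exact uniqueDiffOn_Icc one_pos
  obtain ⟨M, hM⟩ := (isCompact_Icc).exists_bound_of_continuousOn hcont
  have hM0 : 0 ≤ M := le_trans (norm_nonneg _) (hM 0 (by norm_num))
  -- Taylor polynomial
  set P : ℝ → ℝ := fun x => taylorWithinEval f 3 (Icc (0:ℝ) 1) 0 x with hP_def
  have hrem : ∀ x ∈ Icc (0:ℝ) 1, |f x - P x| ≤ M / 6 * x ^ 4 := by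
    intro x hx
    have := taylor_mean_remainder_bound (f := f) (a := 0) (b := 1) (C := M) (n := 3)
      (by norm_num) hfI hx (fun y hy => hM y hy)
    simp only [Real.norm_eq_abs] at this
    refine le_trans this (le_of_eq ?_)
    norm_num [Nat.factorial]
    ring
  -- P is a cubic polynomial
  obtain ⟨d0, d1, d2, d3, hPoly⟩ :
      ∃ d0 d1 d2 d3 : ℝ, ∀ x, P x = d0 + d1 * x + d2 * x ^ 2 + d3 * x ^ 3 := by
    refine ⟨iteratedDerivWithin 0 f (Icc (0:ℝ) 1) 0,
      iteratedDerivWithin 1 f (Icc (0:ℝ) 1) 0,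
      (2:ℝ)⁻¹ * iteratedDerivWithin 2 f (Icc (0:ℝ) 1) 0,
      (6:ℝ)⁻¹ * iteratedDerivWithin 3 f (Icc (0:ℝ) 1) 0, fun x => ?_⟩
    show taylorWithinEval f 3 (Icc (0:ℝ) 1) 0 x = _
    rw [taylor_within_apply]
    simp [Finset.sum_range_succ, Nat.factorial]
    ring
  refine ⟨11 / 3 * (M / 6) + 1, by positivity, 1, one_pos, fun h hh0 hh1 => ?_⟩
  -- nodes are in [0, h] ⊆ [0, 1]
  have ha_nonneg : 0 ≤ h / (2 * s) := by positivity
  have ha_le : h / (2 * s) ≤ h / 2 := by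
    apply div_le_div_of_nonneg_left hh0.le (by norm_num)
    nlinarith
  have mem0 : (0:ℝ) ∈ Icc (0:ℝ) 1 := by norm_num
  have memh2 : h / 2 ∈ Icc (0:ℝ) 1 := ⟨by linarith, by linarith⟩
  have memh : h ∈ Icc (0:ℝ) 1 := ⟨hh0.le, hh1⟩
  have memm : h / 2 - h / (2 * s) ∈ Icc (0:ℝ) 1 := ⟨by linarith, by linarith⟩
  have memp : h / 2 + h / (2 * s) ∈ Icc (0:ℝ) 1 := ⟨by linarith, by linarith⟩
  -- the combination of P vanishes
  have hvan := comb_poly_vanish d0 d1 d2 d3 h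
  simp only [← hs_def] at hvan
  rw [← hPoly 0, ← hPoly (h/2), ← hPoly h, ← hPoly (h/2 - h/(2*s)), ← hPoly (h/2 + h/(2*s))] at hvan
  -- rewrite the difference in terms of remainders
  have key : ((2 / 3) * f 0 + (2 / 3) * f (h / 2) - (1 / 3) * f h) -
      ((1 / 2) * f 0 + (1 / 2) * f (h / 2 - h / (2 * s)) +
        (1 / 2) * f (h / 2 + h / (2 * s)) - (1 / 2) * f h)
      = (2 / 3) * (f 0 - P 0) + (2 / 3) * (f (h/2) - P (h/2)) - (1 / 3) * (f h - P h)
        - ((1 / 2) * (f 0 - P 0) + (1 / 2) * (f (h/2 - h/(2*s)) - P (h/2 - h/(2*s)))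
          + (1 / 2) * (f (h/2 + h/(2*s)) - P (h/2 + h/(2*s))) - (1 / 2) * (f h - P h)) := by
    linear_combination hvan
  rw [key]
  -- bound each remainder
  have hx4 : ∀ x ∈ Icc (0:ℝ) 1, x ≤ h → |f x - P x| ≤ M / 6 * h ^ 4 := by
    intro x hx hxh
    refine (hrem x hx).trans ?_
    have : x ^ 4 ≤ h ^ 4 := by
      apply pow_le_pow_left₀ hx.1 hxh
    nlinarith [this, hM0]
  have b0 := hx4 0 mem0 hh0.le
  have b1 := hx4 (h/2) memh2 (by linarith)
  have b2 := hx4 h memh le_rfl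
  have b3 := hx4 (h/2 - h/(2*s)) memm (by linarith)
  have b4 := hx4 (h/2 + h/(2*s)) memp (by linarith)
  have habs : ∀ a b : ℝ, |a| ≤ b → -b ≤ a ∧ a ≤ b := fun a b hab => abs_le.mp hab
  obtain ⟨l0, r0⟩ := habs _ _ b0
  obtain ⟨l1, r1⟩ := habs _ _ b1
  obtain ⟨l2, r2⟩ := habs _ _ b2
  obtain ⟨l3, r3⟩ := habs _ _ b3
  obtain ⟨l4, r4⟩ := habs _ _ b4
  rw [abs_le]
  have hh4 : 0 ≤ h ^ 4 := by positivity
  constructor <;> nlinarith [hh4, hM0]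
end
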